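/- arXiv:0905.4510 — 3 statements merged into one kernel-verified Lean document; each statement's English description precedes it below -/
import Mathlib

section
/- Let φ be holomorphic on the open ball of radius r > 1 centered at 0 with no zeros on the closed unit disk, let a : ℕ → ℂ be its Taylor coefficient sequence at 0 (so Σₙ|a(n)| < ∞), and let α ∈ ℂ with |α| < 1. Define D := (S − αI)A_α + T_a ∘ (I − (S − αI)A_α) as a bounded operator on H. If f ∈ H is nonzero, λ ∈ ℂ, D f = λ f, and λ ≠ 1, then λ = φ(α). -/
/-!
On `H²`, `A_α f = (f - f(α)) / (z - α)` with `f(α) = ∑ αⁿ f(n)`, so `B = (S - α) A_α` satisfies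
`f - B f = f(α) e₀` and hence `D f = f - f(α) e₀ + f(α) a`. For an eigenvector this reads
`(λ - 1) f = f(α) (a - e₀)`; evaluating at `α` gives `(λ - 1) f(α) = f(α) (φ(α) - 1)`, and
`f(α) ≠ 0` because `λ ≠ 1` and `f ≠ 0`.
-/

open Metric

/-- The Hilbert space `H = ℓ²(ℕ, ℂ)`. -/
noncomputable abbrev H : Type := lp (fun _ : ℕ => ℂ) 2

lemma lp.hasSum_apply_of_hasSum {𝕜 ι κ F : Type*} {E : κ → Type*} [NontriviallyNormedField 𝕜]
    [∀ i, NormedAddCommGroup (E i)] [∀ i, NormedSpace 𝕜 (E i)] {p : ENNReal} [Fact (1 ≤ p)]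
    [NormedAddCommGroup F] [NormedSpace 𝕜 F] {T : ι → F →L[𝕜] lp E p} {A : F →L[𝕜] lp E p}
    (hA : HasSum T A) (x : F) (j : κ) : HasSum (fun i => T i x j) (A x j) :=
  ((lp.evalCLM 𝕜 E p j).comp (ContinuousLinearMap.apply 𝕜 (lp E p) x)).hasSum hA

lemma Complex.hasSum_taylorCoeff_mul_pow {r : ℝ} {φ : ℂ → ℂ}
    (hφ : DifferentiableOn ℂ φ (ball 0 r)) {z : ℂ} (hz : z ∈ ball 0 r) :
    HasSum (fun n => iteratedDeriv n φ 0 / n.factorial * z ^ n) (φ z) := by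
  refine (Complex.hasSum_taylorSeries_on_ball hφ hz).congr_fun fun n => ?_
  rw [sub_zero, smul_eq_mul, smul_eq_mul]
  ring

lemma toeplitz_single_zero_apply {a : ℕ → ℂ} {Ta : H →L[ℂ] H}
    (hTa : ∀ (f : H) (j : ℕ), (Ta f) j = ∑ k ∈ Finset.range (j + 1), a (j - k) * f k)
    (c : ℂ) (j : ℕ) : Ta (lp.single 2 0 c) j = a j * c := by
  rw [hTa, Finset.sum_eq_single_of_mem 0 (by simp) fun k _ hk => by simp [lp.single_apply, hk]]
  simp [lp.single_apply]

section Shifts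

variable {S S' A : H →L[ℂ] H} {α : ℂ}

lemma leftShift_pow_apply (hS' : ∀ (f : H) (j : ℕ), (S' f) j = f (j + 1))
    (n : ℕ) (x : H) (j : ℕ) : ((S' ^ n) x) j = x (j + n) := by
  induction n generalizing x j with
  | zero => rfl
  | succ n ih => rw [pow_succ, mul_apply_eq_comp, ih, hS', add_assoc]

variable (hS' : ∀ (f : H) (j : ℕ), (S' f) j = f (j + 1))
  (hA : HasSum (fun n : ℕ => α ^ n • S' ^ (n + 1)) A)
include hS' hA

lemma hasSum_pow_mul_apply_add_one (x : H) (j : ℕ) :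
    HasSum (fun n => α ^ n * x (j + n + 1)) (A x j) := by
  refine (lp.hasSum_apply_of_hasSum hA x j).congr_fun fun n => ?_
  rw [smul_apply, lp.coeFn_smul, Pi.smul_apply, smul_eq_mul, leftShift_pow_apply hS', add_assoc]

lemma hasSum_pow_mul_apply_add (x : H) (j : ℕ) :
    HasSum (fun n => α ^ n * x (j + n)) (α * A x j + x j) := by
  rw [← hasSum_nat_add_iff' 1]
  simpa [pow_succ', mul_assoc, add_assoc] using (hasSum_pow_mul_apply_add_one hS' hA x j).mul_left α

lemma apply_eq_mul_apply_succ_add (x : H) (j : ℕ) : A x j = α * A x (j + 1) + x (j + 1) := by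
  refine (hasSum_pow_mul_apply_add_one hS' hA x j).unique ?_
  simpa only [add_right_comm j] using hasSum_pow_mul_apply_add hS' hA x (j + 1)

lemma sub_shiftSub_mul_apply_eq_single (hS : ∀ f : H, (S f) 0 = 0 ∧ ∀ j : ℕ, (S f) (j + 1) = f j)
    (x : H) : x - ((S - α • 1) * A) x = lp.single 2 0 (∑' n, α ^ n * x n) := by
  have hB : ∀ j, (x - ((S - α • 1) * A) x) j = x j - (S (A x) j - α * A x j) := fun j => rfl
  ext j
  rw [hB, lp.single_apply]
  rcases j with _ | j
  · have hc := (hasSum_pow_mul_apply_add hS' hA x 0).tsum_eq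
    simp only [zero_add] at hc
    rw [(hS _).1, hc, Pi.single_eq_same]
    ring
  · rw [(hS _).2, apply_eq_mul_apply_succ_add hS' hA x j, Pi.single_eq_of_ne j.succ_ne_zero]
    ring

end Shifts

lemma eq_of_hasSum_of_mul_apply_eq {u a : ℕ → ℂ} {α c lam s : ℂ}
    (hc : HasSum (fun n => α ^ n * u n) c) (hs : HasSum (fun n => a n * α ^ n) s)
    (hu : u ≠ 0) (hlam : lam ≠ 1)
    (heig : ∀ j, lam * u j = u j - (Pi.single 0 c : ℕ → ℂ) j + a j * c) : lam = s := by
  have hc0 : c ≠ 0 := by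
    rintro rfl
    refine hu (funext fun j => ?_)
    have h := heig j
    rw [Pi.single_zero, Pi.zero_apply, mul_zero, sub_zero, add_zero] at h
    by_contra hj
    exact hlam ((mul_eq_right₀ hj).1 h)
  have hlhs : HasSum (fun n => α ^ n * (lam * u n)) (lam * c) :=
    (hc.mul_left lam).congr_fun fun n => by ring
  have hrhs : HasSum (fun n => α ^ n * (lam * u n)) (c - c + s * c) := by
    refine ((hc.sub (hasSum_pi_single 0 c)).add (hs.mul_right c)).congr_fun fun n => ?_
    rw [heig]
    rcases n with _ | n
    · simp
    · rw [Pi.single_eq_of_ne n.succ_ne_zero]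
      ring
  rw [sub_self, zero_add] at hrhs
  exact mul_right_cancel₀ hc0 (hlhs.unique hrhs)

theorem eigenvalue_of_commutator_type_operator_general {r : ℝ} (hr : 1 < r) {φ : ℂ → ℂ}
    (hφ : AnalyticOnNhd ℂ φ (ball (0 : ℂ) r))
    (a : ℕ → ℂ) (ha : ∀ n, a n = iteratedDeriv n φ 0 / (Nat.factorial n : ℂ))
    {α : ℂ} (hα : ‖α‖ < 1)
    (S S' A Ta : H →L[ℂ] H)
    (hS : ∀ f : H, (S f) 0 = 0 ∧ ∀ j : ℕ, (S f) (j + 1) = f j)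
    (hS' : ∀ (f : H) (j : ℕ), (S' f) j = f (j + 1))
    (hA : HasSum (fun n : ℕ => α ^ n • S' ^ (n + 1)) A)
    (hTa : ∀ (f : H) (j : ℕ), (Ta f) j = ∑ k ∈ Finset.range (j + 1), a (j - k) * f k)
    (f : H) (hf : f ≠ 0) (lam : ℂ)
    (heig : ((S - α • 1) * A + Ta * (1 - (S - α • 1) * A)) f = lam • f)
    (hlam : lam ≠ 1) :
    lam = φ α := by
  set c := ∑' n, α ^ n * f n
  have hc : HasSum (fun n => α ^ n * f n) c := by
    simpa using (hasSum_pow_mul_apply_add hS' hA f 0).summable.hasSum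
  have hφα : HasSum (fun n => a n * α ^ n) (φ α) := by
    simpa only [ha] using Complex.hasSum_taylorCoeff_mul_pow hφ.differentiableOn
      (mem_ball_zero_iff.2 (hα.trans hr))
  have hDf : ((S - α • 1) * A + Ta * (1 - (S - α • 1) * A)) f
      = f - lp.single 2 0 c + Ta (lp.single 2 0 c) := by
    rw [← sub_shiftSub_mul_apply_eq_single hS' hA hS f, sub_sub_cancel]
    rfl
  refine eq_of_hasSum_of_mul_apply_eq hc hφα (fun h => hf (lp.ext h)) hlam fun j => ?_
  have hj := congrArg (fun x : H => x j) (hDf.symm.trans heig)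
  simp only [lp.coeFn_add, lp.coeFn_sub, lp.coeFn_smul, Pi.add_apply, Pi.sub_apply,
    Pi.smul_apply, smul_eq_mul, toeplitz_single_zero_apply hTa, lp.single_apply] at hj
  exact hj.symm

theorem eigenvalue_of_commutator_type_operator {r : ℝ} (hr : 1 < r) {φ : ℂ → ℂ}
    (hφ : AnalyticOnNhd ℂ φ (ball (0 : ℂ) r))
    (hne : ∀ z ∈ closedBall (0 : ℂ) 1, φ z ≠ 0)
    (a : ℕ → ℂ) (ha : ∀ n, a n = iteratedDeriv n φ 0 / (Nat.factorial n : ℂ))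
    (hsum : Summable fun n => ‖a n‖)
    {α : ℂ} (hα : ‖α‖ < 1)
    (S S' A Ta : H →L[ℂ] H)
    (hS : ∀ f : H, (S f) 0 = 0 ∧ ∀ j : ℕ, (S f) (j + 1) = f j)
    (hS' : ∀ (f : H) (j : ℕ), (S' f) j = f (j + 1))
    (hA : HasSum (fun n : ℕ => α ^ n • S' ^ (n + 1)) A)
    (hTa : ∀ (f : H) (j : ℕ), (Ta f) j = ∑ k ∈ Finset.range (j + 1), a (j - k) * f k)
    (f : H) (hf : f ≠ 0) (lam : ℂ)
    (heig : ((S - α • 1) * A + Ta * (1 - (S - α • 1) * A)) f = lam • f)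
    (hlam : lam ≠ 1) :
    lam = φ α :=
  eigenvalue_of_commutator_type_operator_general hr hφ a ha hα S S' A Ta hS hS' hA hTa f hf lam heig
    hlam
end

section
/- Let φ be holomorphic on the open ball of radius r > 1 centered at 0 with no zeros on the closed unit disk, let a : ℕ → ℂ be its Taylor coefficient sequence at 0 (so Σₙ|a(n)| < ∞), and let α ∈ ℂ with |α| < 1. Define D := (S − αI)A_α + T_a ∘ (I − (S − αI)A_α), and let g ∈ H be the sequence with g(0) = a(0) − 1 and g(k) = a(k) for k ≥ 1. Then D g = φ(α) · g. -/
/-!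
Write `e₀` for the first basis vector. Since `A_α` inverts `S - α` on the tail coordinates,
`(S - α) A_α f = f - (∑ αⁿ f(n)) e₀`: the defect is the generating function of `f` evaluated
at `α`. Now `T_a e₀ = a`, so `g = T_a e₀ - e₀`, whose generating function at `α` is
`φ(α) - 1 =: c`. Hence `D g = (g - c e₀) + c T_a e₀ = (1 + c) g = φ(α) g`.
-/

open Metric

section

variable {S S' A : H →L[ℂ] H} {α : ℂ}

theorem shift_pow_apply (hS' : ∀ (f : H) (j : ℕ), (S' f) j = f (j + 1))
    (n : ℕ) (f : H) (j : ℕ) : ((S' ^ n) f) j = f (j + n) := by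
  induction n generalizing f with
  | zero => rfl
  | succ n ih => rw [pow_succ, mul_apply_eq_comp, ih, hS', add_assoc]

theorem hasSum_pow_mul_shift_apply (hS' : ∀ (f : H) (j : ℕ), (S' f) j = f (j + 1))
    (hA : HasSum (fun n : ℕ => α ^ n • S' ^ (n + 1)) A) (f : H) (j : ℕ) :
    HasSum (fun n : ℕ => α ^ n * f (j + 1 + n)) ((A f) j) := by
  have h : HasSum (fun n => α ^ n • ((S' ^ (n + 1)) f) j) ((A f) j) :=
    hA.mapL ((lp.evalCLM ℂ _ 2 j).comp (ContinuousLinearMap.apply ℂ H f))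
  simpa only [shift_pow_apply hS', smul_eq_mul, ← add_assoc, add_right_comm _ _ 1] using h

theorem hasSum_pow_mul_apply (hS' : ∀ (f : H) (j : ℕ), (S' f) j = f (j + 1))
    (hA : HasSum (fun n : ℕ => α ^ n • S' ^ (n + 1)) A) (f : H) (j : ℕ) :
    HasSum (fun n : ℕ => α ^ n * f (j + n)) (f j + α * (A f) j) := by
  rw [← hasSum_nat_add_iff' 1]
  simpa [pow_succ', mul_assoc, add_comm 1, add_assoc] using
    (hasSum_pow_mul_shift_apply hS' hA f j).mul_left α

theorem sub_smul_one_mul_apply_eq_sub_single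
    (hS : ∀ f : H, (S f) 0 = 0 ∧ ∀ j : ℕ, (S f) (j + 1) = f j)
    (hS' : ∀ (f : H) (j : ℕ), (S' f) j = f (j + 1))
    (hA : HasSum (fun n : ℕ => α ^ n • S' ^ (n + 1)) A) {f : H} {s : ℂ}
    (hf : HasSum (fun n : ℕ => α ^ n * f n) s) :
    ((S - α • 1) * A) f = f - s • lp.single 2 0 1 := by
  ext j
  have hSA : ((S - α • 1) * A) f j = S (A f) j - α * (A f) j := rfl
  rw [hSA, lp.coeFn_sub, Pi.sub_apply, lp.coeFn_smul, Pi.smul_apply, lp.single_apply,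
    smul_eq_mul]
  cases j with
  | zero =>
    have hs : s = f 0 + α * (A f) 0 := by
      simpa using hf.unique (by simpa using hasSum_pow_mul_apply hS' hA f 0)
    simp [(hS _).1, hs]
  | succ j =>
    have hAj : (A f) j = f (j + 1) + α * (A f) (j + 1) :=
      (hasSum_pow_mul_shift_apply hS' hA f j).unique (hasSum_pow_mul_apply hS' hA f (j + 1))
    simp [(hS _).2, hAj]

end

theorem toeplitz_apply_single_zero {a : ℕ → ℂ} {Ta : H →L[ℂ] H}
    (hTa : ∀ (f : H) (j : ℕ), (Ta f) j = ∑ k ∈ Finset.range (j + 1), a (j - k) * f k) (j : ℕ) :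
    Ta (lp.single 2 0 1) j = a j := by
  rw [hTa, Finset.sum_eq_single 0] <;> simp +contextual

theorem hasSum_pow_mul_taylorCoeff {φ : ℂ → ℂ} {r : ℝ}
    (hφ : DifferentiableOn ℂ φ (ball 0 r)) {a : ℕ → ℂ}
    (ha : ∀ n, a n = iteratedDeriv n φ 0 / (Nat.factorial n : ℂ)) {z : ℂ} (hz : z ∈ ball 0 r) :
    HasSum (fun n => z ^ n * a n) (φ z) := by
  have hfun : (fun n => (n.factorial : ℂ)⁻¹ • (z - 0) ^ n • iteratedDeriv n φ 0) =
      fun n => z ^ n * a n := by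
    ext n
    rw [ha, sub_zero, smul_eq_mul, smul_eq_mul]
    ring
  exact hfun ▸ Complex.hasSum_taylorSeries_on_ball hφ hz

theorem eigenvector_of_commutator_type_operator_general {r : ℝ} (hr : 1 < r) {φ : ℂ → ℂ}
    (hφ : AnalyticOnNhd ℂ φ (ball (0 : ℂ) r))
    (a : ℕ → ℂ) (ha : ∀ n, a n = iteratedDeriv n φ 0 / (Nat.factorial n : ℂ))
    {α : ℂ} (hα : ‖α‖ < 1)
    (S S' A Ta : H →L[ℂ] H)
    (hS : ∀ f : H, (S f) 0 = 0 ∧ ∀ j : ℕ, (S f) (j + 1) = f j)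
    (hS' : ∀ (f : H) (j : ℕ), (S' f) j = f (j + 1))
    (hA : HasSum (fun n : ℕ => α ^ n • S' ^ (n + 1)) A)
    (hTa : ∀ (f : H) (j : ℕ), (Ta f) j = ∑ k ∈ Finset.range (j + 1), a (j - k) * f k)
    (g : H) (hg0 : g 0 = a 0 - 1) (hgk : ∀ k : ℕ, g (k + 1) = a (k + 1)) :
    ((S - α • 1) * A + Ta * (1 - (S - α • 1) * A)) g = φ α • g := by
  set e₀ : H := lp.single 2 0 1
  have hg : g = Ta e₀ - e₀ := by
    ext (_ | k) <;> simp [toeplitz_apply_single_zero hTa, e₀, hg0, hgk]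
  have hTaylor : HasSum (fun n => α ^ n * a n) (φ α) :=
    hasSum_pow_mul_taylorCoeff hφ.differentiableOn ha (mem_ball_zero_iff.mpr (hα.trans hr))
  have hgsum : HasSum (fun n => α ^ n * g n) (φ α - 1) := by
    have hcoord :
        (fun n => α ^ n * a n - Pi.single (M := fun _ => ℂ) 0 1 n) = fun n => α ^ n * g n := by
      ext (_ | n) <;> simp [hg0, hgk]
    exact hcoord ▸ hTaylor.sub (hasSum_pi_single 0 1)
  calc ((S - α • 1) * A + Ta * (1 - (S - α • 1) * A)) g
      = (g - (φ α - 1) • e₀) + (φ α - 1) • Ta e₀ := by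
        simp [sub_smul_one_mul_apply_eq_sub_single hS hS' hA hgsum, e₀]
    _ = φ α • g := by
        rw [hg]
        module

theorem eigenvector_of_commutator_type_operator {r : ℝ} (hr : 1 < r) {φ : ℂ → ℂ}
    (hφ : AnalyticOnNhd ℂ φ (ball (0 : ℂ) r))
    (hne : ∀ z ∈ closedBall (0 : ℂ) 1, φ z ≠ 0)
    (a : ℕ → ℂ) (ha : ∀ n, a n = iteratedDeriv n φ 0 / (Nat.factorial n : ℂ))
    (hsum : Summable fun n => ‖a n‖)
    {α : ℂ} (hα : ‖α‖ < 1)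
    (S S' A Ta : H →L[ℂ] H)
    (hS : ∀ f : H, (S f) 0 = 0 ∧ ∀ j : ℕ, (S f) (j + 1) = f j)
    (hS' : ∀ (f : H) (j : ℕ), (S' f) j = f (j + 1))
    (hA : HasSum (fun n : ℕ => α ^ n • S' ^ (n + 1)) A)
    (hTa : ∀ (f : H) (j : ℕ), (Ta f) j = ∑ k ∈ Finset.range (j + 1), a (j - k) * f k)
    (g : H) (hg0 : g 0 = a 0 - 1) (hgk : ∀ k : ℕ, g (k + 1) = a (k + 1)) :
    ((S - α • 1) * A + Ta * (1 - (S - α • 1) * A)) g = φ α • g :=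
  eigenvector_of_commutator_type_operator_general hr hφ a ha hα S S' A Ta hS hS' hA hTa g hg0 hgk
end

section
/- Let α, β ∈ ℂ with |α| < 1 and |β| < 1. Define the bounded operator E := (S − αI)(S − βI)A_α A_β + (I − (S − αI)A_α) A_β + (S − αI)(I − (S − βI)A_β) on H (this is T_φ T_ψ T_{φ^{−1}} T_{ψ^{−1}} + (I − T_φ T_{φ^{−1}})T_{ψ^{−1}} + T_φ(I − T_ψ T_{ψ^{−1}}) for φ(z) = z − α, ψ(z) = z − β). If f ∈ H is nonzero, λ ∈ ℂ, E f = λ f, and λ ≠ 1, then λ² + (α − β)λ − 1 = 0. -/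
open Metric

/-!
`A_γ = Σ γⁿ (S*)ⁿ⁺¹` satisfies the coordinate recursion `(A_γ f)_j = f_{j+1} + γ (A_γ f)_{j+1}`.
Feeding it into the five terms of `E`, everything cancels in the coordinates `j ≥ 2`, where
`(E f)_j = f_j`. So an eigenvector with `λ ≠ 1` is supported on `{0, 1}`. For such `f`,
`A_β f = f_1 e_0` and `A_α A_β f = 0`, and `E` acts on `(f_0, f_1)` by the matrix
`[[-α, 1 - αβ], [1, β]]`, whose characteristic polynomial is `λ² + (α - β)λ - 1`.
-/

open scoped ENNReal

section ShiftOperators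

variable {𝕜 : Type*} [NontriviallyNormedField 𝕜] {p : ℝ≥0∞} [Fact (1 ≤ p)]

def IsRightShift (S : lp (fun _ : ℕ => 𝕜) p →L[𝕜] lp (fun _ : ℕ => 𝕜) p) : Prop :=
  ∀ f, (S f) 0 = 0 ∧ ∀ j : ℕ, (S f) (j + 1) = f j

def IsLeftShift (S' : lp (fun _ : ℕ => 𝕜) p →L[𝕜] lp (fun _ : ℕ => 𝕜) p) : Prop :=
  ∀ f j, (S' f) j = f (j + 1)

namespace IsRightShift

variable {S : lp (fun _ : ℕ => 𝕜) p →L[𝕜] lp (fun _ : ℕ => 𝕜) p}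

lemma sub_smul_one_apply_zero (hS : IsRightShift S) (γ : 𝕜) (f : lp (fun _ : ℕ => 𝕜) p) :
    ((S - γ • 1) f) 0 = -γ * f 0 := by
  simp only [sub_apply, smul_apply, one_apply_eq_self, lp.coeFn_sub, lp.coeFn_smul, Pi.sub_apply,
    Pi.smul_apply, (hS f).1, smul_eq_mul]
  ring

lemma sub_smul_one_apply_succ (hS : IsRightShift S) (γ : 𝕜) (f : lp (fun _ : ℕ => 𝕜) p)
    (j : ℕ) : ((S - γ • 1) f) (j + 1) = f j - γ * f (j + 1) := by
  simp only [sub_apply, smul_apply, one_apply_eq_self, lp.coeFn_sub, lp.coeFn_smul, Pi.sub_apply,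
    Pi.smul_apply, (hS f).2, smul_eq_mul]

end IsRightShift

namespace IsLeftShift

variable {S' A : lp (fun _ : ℕ => 𝕜) p →L[𝕜] lp (fun _ : ℕ => 𝕜) p} {γ : 𝕜}

lemma pow_apply (hS' : IsLeftShift S') (n : ℕ) (f : lp (fun _ : ℕ => 𝕜) p) (j : ℕ) :
    ((S' ^ n) f) j = f (j + n) := by
  induction n generalizing f j with
  | zero => rfl
  | succ n ih => rw [pow_succ, mul_apply_eq_comp, ih, hS', Nat.add_assoc]

lemma hasSum_apply_of_hasSum (hS' : IsLeftShift S')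
    (hA : HasSum (fun n : ℕ => γ ^ n • S' ^ (n + 1)) A) (f : lp (fun _ : ℕ => 𝕜) p) (j : ℕ) :
    HasSum (fun n : ℕ => γ ^ n * f (j + n + 1)) ((A f) j) := by
  have := (hA.mapL (ContinuousLinearMap.apply 𝕜 _ f)).mapL (lp.evalCLM 𝕜 _ p j)
  simpa only [lp.evalCLM, LinearMap.mkContinuous_apply, lp.evalₗ_apply,
    ContinuousLinearMap.apply_apply, smul_apply, lp.coeFn_smul, Pi.smul_apply, smul_eq_mul,
    hS'.pow_apply, Nat.add_assoc] using this

lemma apply_eq_add_mul_apply_succ_of_hasSum (hS' : IsLeftShift S')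
    (hA : HasSum (fun n : ℕ => γ ^ n • S' ^ (n + 1)) A) (f : lp (fun _ : ℕ => 𝕜) p) (j : ℕ) :
    (A f) j = f (j + 1) + γ * (A f) (j + 1) := by
  have htail : HasSum (fun n => γ ^ (n + 1) * f (j + (n + 1) + 1)) (γ * (A f) (j + 1)) := by
    have hshift : (fun n => γ * (γ ^ n * f (j + 1 + n + 1)))
        = fun n => γ ^ (n + 1) * f (j + (n + 1) + 1) := by
      funext n
      rw [show j + 1 + n + 1 = j + (n + 1) + 1 by omega, pow_succ']
      ring
    exact hshift ▸ (hS'.hasSum_apply_of_hasSum hA f (j + 1)).mul_left γ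
  have hsum := (hasSum_nat_add_iff (f := fun n => γ ^ n * f (j + n + 1)) 1).mp htail
  rw [Finset.sum_range_one, pow_zero, one_mul, add_zero] at hsum
  rw [(hS'.hasSum_apply_of_hasSum hA f j).unique hsum, add_comm]

lemma apply_eq_zero_of_hasSum (hS' : IsLeftShift S')
    (hA : HasSum (fun n : ℕ => γ ^ n • S' ^ (n + 1)) A) {f : lp (fun _ : ℕ => 𝕜) p} {m : ℕ}
    (hf : ∀ j, m < j → f j = 0) {j : ℕ} (hj : m ≤ j) :
    (A f) j = 0 := by
  refine (hS'.hasSum_apply_of_hasSum hA f j).unique ?_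
  convert hasSum_zero with n
  rw [hf _ (by omega), mul_zero]

end IsLeftShift

noncomputable def twoSymbolOperator (α β : 𝕜)
    (S Aα Aβ : lp (fun _ : ℕ => 𝕜) p →L[𝕜] lp (fun _ : ℕ => 𝕜) p) :
    lp (fun _ : ℕ => 𝕜) p →L[𝕜] lp (fun _ : ℕ => 𝕜) p :=
  (S - α • 1) * (S - β • 1) * Aα * Aβ + (1 - (S - α • 1) * Aα) * Aβ +
    (S - α • 1) * (1 - (S - β • 1) * Aβ)

section TwoSymbolOperator

variable {α β : 𝕜} {S S' Aα Aβ : lp (fun _ : ℕ => 𝕜) p →L[𝕜] lp (fun _ : ℕ => 𝕜) p}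

lemma twoSymbolOperator_apply (f : lp (fun _ : ℕ => 𝕜) p) :
    twoSymbolOperator α β S Aα Aβ f = (S - α • 1) ((S - β • 1) (Aα (Aβ f))) + Aβ f
      - (S - α • 1) (Aα (Aβ f)) + (S - α • 1) f - (S - α • 1) ((S - β • 1) (Aβ f)) := by
  simp only [twoSymbolOperator, add_apply, mul_apply_eq_comp, sub_apply (1 : _ →L[𝕜] _),
    one_apply_eq_self, map_sub]
  abel

lemma twoSymbolOperator_apply_add_two (hS : IsRightShift S) (hS' : IsLeftShift S')
    (hAα : HasSum (fun n : ℕ => α ^ n • S' ^ (n + 1)) Aα)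
    (hAβ : HasSum (fun n : ℕ => β ^ n • S' ^ (n + 1)) Aβ) (f : lp (fun _ : ℕ => 𝕜) p) (j : ℕ) :
    twoSymbolOperator α β S Aα Aβ f (j + 2) = f (j + 2) := by
  simp only [twoSymbolOperator_apply, lp.coeFn_add, lp.coeFn_sub, Pi.add_apply, Pi.sub_apply,
    hS.sub_smul_one_apply_succ]
  rw [hS'.apply_eq_add_mul_apply_succ_of_hasSum hAα _ j,
    hS'.apply_eq_add_mul_apply_succ_of_hasSum hAα _ (j + 1),
    hS'.apply_eq_add_mul_apply_succ_of_hasSum hAβ _ j,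
    hS'.apply_eq_add_mul_apply_succ_of_hasSum hAβ _ (j + 1)]
  ring

lemma twoSymbolOperator_apply_zero_and_one (hS : IsRightShift S) (hS' : IsLeftShift S')
    (hAα : HasSum (fun n : ℕ => α ^ n • S' ^ (n + 1)) Aα)
    (hAβ : HasSum (fun n : ℕ => β ^ n • S' ^ (n + 1)) Aβ) {f : lp (fun _ : ℕ => 𝕜) p}
    (hf : ∀ j, 1 < j → f j = 0) :
    twoSymbolOperator α β S Aα Aβ f 0 = -α * f 0 + (1 - α * β) * f 1 ∧
      twoSymbolOperator α β S Aα Aβ f 1 = f 0 + β * f 1 := by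
  have hg : ∀ j, 0 < j → (Aβ f) j = 0 := fun j hj => hS'.apply_eq_zero_of_hasSum hAβ hf hj
  have hg0 : (Aβ f) 0 = f 1 := by
    simpa [hg 1 one_pos] using hS'.apply_eq_add_mul_apply_succ_of_hasSum hAβ f 0
  have hh : ∀ j, (Aα (Aβ f)) j = 0 := fun j => hS'.apply_eq_zero_of_hasSum hAα hg j.zero_le
  simp only [twoSymbolOperator_apply, lp.coeFn_add, lp.coeFn_sub, Pi.add_apply, Pi.sub_apply,
    hS.sub_smul_one_apply_zero, hS.sub_smul_one_apply_succ (j := 0), hh, hg0, hg 1 one_pos]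
  constructor <;> ring

end TwoSymbolOperator

end ShiftOperators

lemma eigenvalue_quadratic_of_planar_eigenvector {K : Type*} [Field K] {α β lam a b : K}
    (h0 : -α * a + (1 - α * β) * b = lam * a) (h1 : a + β * b = lam * b) (hab : a ≠ 0 ∨ b ≠ 0) :
    lam ^ 2 + (α - β) * lam - 1 = 0 := by
  have hb : b ≠ 0 := by
    rintro rfl
    rcases hab with ha | hb
    · exact ha (by simpa using h1)
    · exact hb rfl
  have key : (lam ^ 2 + (α - β) * lam - 1) * b = 0 := by
    linear_combination (-1 : K) * h0 - (α + lam) * h1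
  exact (mul_eq_zero.mp key).resolve_right hb

theorem eigenvalue_quadratic_of_two_linear_symbols_general {α β : ℂ}
    (S S' Aα Aβ : H →L[ℂ] H)
    (hS : ∀ f : H, (S f) 0 = 0 ∧ ∀ j : ℕ, (S f) (j + 1) = f j)
    (hS' : ∀ (f : H) (j : ℕ), (S' f) j = f (j + 1))
    (hAα : HasSum (fun n : ℕ => α ^ n • S' ^ (n + 1)) Aα)
    (hAβ : HasSum (fun n : ℕ => β ^ n • S' ^ (n + 1)) Aβ)
    (f : H) (hf : f ≠ 0) (lam : ℂ)
    (heig : ((S - α • 1) * (S - β • 1) * Aα * Aβ +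
        (1 - (S - α • 1) * Aα) * Aβ +
        (S - α • 1) * (1 - (S - β • 1) * Aβ)) f = lam • f)
    (hlam : lam ≠ 1) :
    lam ^ 2 + (α - β) * lam - 1 = 0 := by
  have hcoord (j : ℕ) : twoSymbolOperator α β S Aα Aβ f j = lam * f j := congrArg (· j) heig
  have htail : ∀ j, 1 < j → f j = 0 := by
    intro j hj
    obtain ⟨k, rfl⟩ : ∃ k, j = k + 2 := ⟨j - 2, by omega⟩
    have hfix := hcoord (k + 2)
    rw [twoSymbolOperator_apply_add_two hS hS' hAα hAβ] at hfix
    have : (lam - 1) * f (k + 2) = 0 := by linear_combination -hfix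
    exact (mul_eq_zero.mp this).resolve_left (sub_ne_zero.mpr hlam)
  obtain ⟨h0, h1⟩ := twoSymbolOperator_apply_zero_and_one hS hS' hAα hAβ htail
  refine eigenvalue_quadratic_of_planar_eigenvector (h0.symm.trans (hcoord 0))
    (h1.symm.trans (hcoord 1)) ?_
  by_contra! hzero
  refine hf (lp.ext (funext fun j => ?_))
  rcases j with _ | _ | j
  exacts [hzero.1, hzero.2, htail _ (by omega)]

theorem eigenvalue_quadratic_of_two_linear_symbols {α β : ℂ} (hα : ‖α‖ < 1) (hβ : ‖β‖ < 1)
    (S S' Aα Aβ : H →L[ℂ] H)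
    (hS : ∀ f : H, (S f) 0 = 0 ∧ ∀ j : ℕ, (S f) (j + 1) = f j)
    (hS' : ∀ (f : H) (j : ℕ), (S' f) j = f (j + 1))
    (hAα : HasSum (fun n : ℕ => α ^ n • S' ^ (n + 1)) Aα)
    (hAβ : HasSum (fun n : ℕ => β ^ n • S' ^ (n + 1)) Aβ)
    (f : H) (hf : f ≠ 0) (lam : ℂ)
    (heig : ((S - α • 1) * (S - β • 1) * Aα * Aβ +
        (1 - (S - α • 1) * Aα) * Aβ +
        (S - α • 1) * (1 - (S - β • 1) * Aβ)) f = lam • f)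
    (hlam : lam ≠ 1) :
    lam ^ 2 + (α - β) * lam - 1 = 0 :=
  eigenvalue_quadratic_of_two_linear_symbols_general S S' Aα Aβ hS hS' hAα hAβ f hf lam heig hlam
end
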